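/- arXiv:1512.02328 — 3 statements merged into one kernel-verified Lean document; each statement's English description precedes it below -/
import Mathlib

section
/- Let G be a loopless multigraph on n ≥ 2 vertices with maximum degree Δ ≥ 1, and let Z be a subset of the vertex set such that (i) every vertex v ∈ Z is heavy, i.e., n·d(v) ≥ (n−1)·Δ, and (ii) the subgraph of the support of G induced by Z is bipartite. Then there exists a matching of G that saturates every vertex of Z. -/
open scoped Classical

namespace NSBPaper

variable {V : Type} [Fintype V] [DecidableEq V]

/-- Degree of a vertex in a loopless multigraph given by multiplicity function `w`. -/
def deg (w : V → V → ℕ) (v : V) : ℕ := ∑ u, w v u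

/-- Maximum degree of the multigraph. -/
def maxDeg (w : V → V → ℕ) : ℕ := Finset.univ.sup fun v => deg w v

/-- The support simple graph of a multigraph: `u` and `v` are adjacent iff `u ≠ v`
and there is at least one multi-edge between them. -/
def support (w : V → V → ℕ) : SimpleGraph V where
  Adj u v := u ≠ v ∧ 1 ≤ w u v ∧ 1 ≤ w v u
  symm := ⟨fun u v h => ⟨h.1.symm, h.2.2, h.2.1⟩⟩
  loopless := ⟨fun v h => h.1 rfl⟩

/-- A set of unordered pairs `M` saturates a vertex `v` if some pair of `M` contains `v`. -/
def Saturates (M : Finset (Sym2 V)) (v : V) : Prop := ∃ e ∈ M, v ∈ e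

/-- `M` is a matching of the multigraph `w`: its elements are non-loop edges of the
support, and no two distinct elements share a vertex. -/
def IsMatching (w : V → V → ℕ) (M : Finset (Sym2 V)) : Prop :=
  (∀ e ∈ M, ¬ e.IsDiag) ∧
  (∀ u v : V, s(u, v) ∈ M → 1 ≤ w u v) ∧
  (∀ e ∈ M, ∀ f ∈ M, e ≠ f → ∀ x : V, x ∈ e → x ∉ f)

/-- `M` is a maximal matching of `w`: no pair can be added keeping it a matching. -/
def IsMaximalMatching (w : V → V → ℕ) (M : Finset (Sym2 V)) : Prop :=
  IsMatching w M ∧ ∀ e : Sym2 V, e ∉ M → ¬ IsMatching w (insert e M)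

/-- Removing a matching `M` from the multigraph `w`: the multiplicity of each pair in `M`
decreases by one. -/
def removeMatching (w : V → V → ℕ) (M : Finset (Sym2 V)) : V → V → ℕ :=
  fun u v => if s(u, v) ∈ M then w u v - 1 else w u v

/-- The subgraph of `G` induced by `Z` is bipartite: there is a set `A` such that every
edge of `G` inside `Z` joins `A` to its complement. -/
def BipartiteOn (G : SimpleGraph V) (Z : Set V) : Prop :=
  ∃ A : Set V, ∀ ⦃u v : V⦄, u ∈ Z → v ∈ Z → G.Adj u v → (u ∈ A ↔ v ∉ A)

/-- The edge multiset of `w` can be partitioned into `T` matchings. -/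
def CanEvacuate (w : V → V → ℕ) (T : ℕ) : Prop :=
  ∃ M : Fin T → Finset (Sym2 V),
    (∀ j, IsMatching w (M j)) ∧
    ∀ u v : V, (Finset.univ.filter fun j => s(u, v) ∈ M j).card = w u v

/-- The vertex-weight of a matching: the sum of the weights of its saturated vertices. -/
noncomputable def matchWeight (φ : V → ℕ) (M : Finset (Sym2 V)) : ℕ :=
  ∑ v : V, if Saturates M v then φ v else 0

/-- `Rfun M k i = 1` iff vertex `i` is saturated by the matching chosen in slot `k`. -/
noncomputable def Rfun (M : ℕ → Finset (Sym2 V)) (k : ℕ) (i : V) : ℕ :=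
  if Saturates (M k) i then 1 else 0

/-- `Ufun M k i` is `R i (k-1) * R i (k-2)` if `k ≡ 2 [MOD 3]` and `R i (k-1)` otherwise,
with `R i k = 0` for `k < 0`. -/
noncomputable def Ufun (M : ℕ → Finset (Sym2 V)) (k : ℕ) (i : V) : ℕ :=
  if k = 0 then 0
  else if k % 3 = 2 then Rfun M (k - 1) i * Rfun M (k - 2) i
  else Rfun M (k - 1) i

/-- Vertex `i` is heavy in `w`: `n * d(i) ≥ (n - 1) * Δ`. -/
def Heavy (w : V → V → ℕ) (i : V) : Prop :=
  (Fintype.card V - 1) * maxDeg w ≤ Fintype.card V * deg w i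

/-- Vertex `i` is critical in `w`: its degree is the maximum degree. -/
def Critical (w : V → V → ℕ) (i : V) : Prop := deg w i = maxDeg w

/-- The NSB weight of vertex `i`, where `u i` records whether `i` received enough
service previously. -/
noncomputable def nsbWeight (w : V → V → ℕ) (u : V → ℕ) (i : V) : ℕ :=
  if Heavy w i then deg w i * (2 - u i) else deg w i

/-- The LC-NSB weight of vertex `i`. -/
noncomputable def lcnsbWeight (w : V → V → ℕ) (u : V → ℕ) (i : V) : ℕ :=
  if Critical w i then 5 - 2 * u i
  else if Heavy w i then 4 - 2 * u i
  else 1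

/-- An NSB evacuation run on the initial multigraph `w0`: in each slot `k`, a matching
`M k` of `G k` maximizing the total NSB weight of saturated vertices is removed. -/
structure NSBRun (w0 : V → V → ℕ) where
  G : ℕ → V → V → ℕ
  M : ℕ → Finset (Sym2 V)
  init : G 0 = w0
  step : ∀ k, G (k + 1) = removeMatching (G k) (M k)
  matching : ∀ k, IsMatching (G k) (M k)
  opt : ∀ k, ∀ M' : Finset (Sym2 V), IsMatching (G k) M' →
    matchWeight (nsbWeight (G k) (Ufun M k)) M' ≤ matchWeight (nsbWeight (G k) (Ufun M k)) (M k)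

/-- An LC-NSB evacuation run on the initial multigraph `w0`. -/
structure LCNSBRun (w0 : V → V → ℕ) where
  G : ℕ → V → V → ℕ
  M : ℕ → Finset (Sym2 V)
  init : G 0 = w0
  step : ∀ k, G (k + 1) = removeMatching (G k) (M k)
  matching : ∀ k, IsMatching (G k) (M k)
  opt : ∀ k, ∀ M' : Finset (Sym2 V), IsMatching (G k) M' →
    matchWeight (lcnsbWeight (G k) (Ufun M k)) M' ≤
      matchWeight (lcnsbWeight (G k) (Ufun M k)) (M k)


end NSBPaper

/-!
Hall's theorem turns heaviness into an injection `f` sending each vertex of `Z` to a neighbour: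
by double counting degrees, a set `S` of heavy vertices has at least `|S| - |S|/n` neighbours,
hence at least `|S|` unless `S` is everything, and then every vertex has an edge. The edges
`{z, f z}`, `z ∈ Z`, form vertex-disjoint paths and cycles, the cycles lying in `Z` and hence even;
every other edge along each of them, starting with the first edge of each path, is a matching
saturating `Z`.
-/

namespace NSBPaper

open Finset Function

variable {V : Type}

lemma support_adj_iff {w : V → V → ℕ} (hsymm : ∀ u v, w u v = w v u) (hloop : ∀ v, w v v = 0)
    {u v : V} : (support w).Adj u v ↔ w u v ≠ 0 := by
  refine ⟨fun h => Nat.one_le_iff_ne_zero.1 h.2.1, fun h => ⟨?_, ?_, ?_⟩⟩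
  · rintro rfl
    exact h (hloop u)
  · exact Nat.one_le_iff_ne_zero.2 h
  · exact Nat.one_le_iff_ne_zero.2 (hsymm u v ▸ h)

section Alternation

variable {α : Type*} {f : α → α} {Z : Set α}

lemma exists_alternating_set_of_injective (hf : Injective f) {A : Set α}
    (hA : ∀ z ∈ Z, f z ∈ Z → (z ∈ A ↔ f z ∉ A)) :
    ∃ C : Set α, (∀ z ∈ Z, f z ∈ Z → (z ∈ C ↔ f z ∉ C)) ∧
      ∀ z ∈ Z, (∀ y ∈ Z, f y ≠ z) → z ∈ C := by
  let starts : Set α := {p ∈ Z | ∀ y ∈ Z, f y ≠ p}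
  let IsDist (z : α) (j : ℕ) : Prop := ∃ p ∈ starts, f^[j] p = z
  have dist_zero (z : α) (hz : z ∈ Z) : ¬ IsDist (f z) 0 :=
    fun ⟨_, hp, hpz⟩ => hp.2 z hz hpz.symm
  have dist_succ (z : α) (j : ℕ) : IsDist (f z) (j + 1) ↔ IsDist z j := by
    simp only [IsDist, iterate_succ_apply', hf.eq_iff]
  -- Chains with a start are recoloured by the parity of the distance from it; the others keep `A`.
  refine ⟨{z | if h : ∃ j, IsDist z j then Even (Nat.find h) else z ∈ A}, ?_, ?_⟩
  · intro z hz hfz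
    by_cases h : ∃ j, IsDist z j
    · have h₂ : ∃ j, IsDist (f z) (j + 1) := h.imp fun j => (dist_succ z j).2
      have h' : ∃ j, IsDist (f z) j := h₂.elim fun j hj => ⟨j + 1, hj⟩
      have hfind : Nat.find h' = Nat.find h + 1 :=
        (Nat.find_comp_succ h' h₂ (dist_zero z hz)).trans
          (congrArg (· + 1) (Nat.find_congr' (dist_succ z _)))
      simp only [Set.mem_ofPred_eq, dif_pos h, dif_pos h', hfind, Nat.even_add_one, not_not]
    · have h' : ¬ ∃ j, IsDist (f z) j := by
        rintro ⟨_ | j, hj⟩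
        exacts [dist_zero z hz hj, h ⟨j, (dist_succ z j).1 hj⟩]
      simpa only [Set.mem_ofPred_eq, dif_neg h, dif_neg h'] using hA z hz hfz
  · intro z hz hstart
    have h : ∃ j, IsDist z j := ⟨0, z, ⟨hz, hstart⟩, rfl⟩
    simp only [Set.mem_ofPred_eq, dif_pos h, (Nat.find_eq_zero h).2 ⟨z, ⟨hz, hstart⟩, rfl⟩,
      Even.zero]

end Alternation

lemma isMatching_image_of_injective {w : V → V → ℕ} (hsymm : ∀ u v, w u v = w v u)
    (hloop : ∀ v, w v v = 0) {f : V → V} (hf : Injective f) {S : Finset V}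
    (hS : ∀ z ∈ S, w z (f z) ≠ 0) (hfS : ∀ z ∈ S, f z ∉ S) :
    IsMatching w (S.image fun z => s(z, f z)) := by
  refine ⟨?_, ?_, ?_⟩
  · simp only [mem_image, forall_exists_index, and_imp]
    rintro _ z hz rfl hdiag
    rw [Sym2.mk_isDiag_iff] at hdiag
    exact hS z hz (hdiag ▸ hloop z)
  · simp only [mem_image, forall_exists_index, and_imp]
    intro u v z hz huv
    rw [Nat.one_le_iff_ne_zero]
    rcases Sym2.eq_iff.1 huv with ⟨rfl, rfl⟩ | ⟨rfl, rfl⟩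
    exacts [hS z hz, hsymm _ _ ▸ hS z hz]
  · simp only [mem_image, forall_exists_index, and_imp]
    rintro _ z₁ hz₁ rfl _ z₂ hz₂ rfl hne x hx₁ hx₂
    rcases Sym2.mem_iff.1 hx₁ with rfl | rfl <;> rcases Sym2.mem_iff.1 hx₂ with h | h
    · exact hne (h ▸ rfl)
    · exact hfS z₂ hz₂ (h ▸ hz₁)
    · exact hfS z₁ hz₁ (h ▸ hz₂)
    · exact hne (hf h ▸ rfl)

variable [Fintype V]

lemma deg_le_maxDeg (w : V → V → ℕ) (v : V) : deg w v ≤ maxDeg w :=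
  le_sup (f := deg w) (mem_univ v)

lemma sum_deg_le_card_mul_maxDeg {w : V → V → ℕ} (hsymm : ∀ u v, w u v = w v u)
    {s N : Finset V} (hN : ∀ v ∈ s, ∀ u, w v u ≠ 0 → u ∈ N) :
    ∑ v ∈ s, deg w v ≤ #N * maxDeg w :=
  calc ∑ v ∈ s, deg w v = ∑ v ∈ s, ∑ u ∈ N, w v u := sum_congr rfl fun v hv =>
        (sum_subset (subset_univ N) fun u _ hu => not_not.1 (mt (hN v hv u) hu)).symm
    _ = ∑ u ∈ N, ∑ v ∈ s, w u v := by rw [sum_comm]; simp only [hsymm]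
    _ ≤ ∑ u ∈ N, deg w u := sum_le_sum fun u _ => sum_le_sum_of_subset (subset_univ s)
    _ ≤ ∑ _u ∈ N, maxDeg w := sum_le_sum fun u _ => deg_le_maxDeg w u
    _ = #N * maxDeg w := by rw [sum_const, smul_eq_mul]

lemma deg_ne_zero_of_heavy {w : V → V → ℕ} (hn : 2 ≤ Fintype.card V) (hΔ : 1 ≤ maxDeg w)
    {v : V} (hv : Heavy w v) : deg w v ≠ 0 := by
  intro h0
  rw [Heavy, h0, mul_zero, Nat.le_zero, mul_eq_zero] at hv
  omega

lemma card_le_card_neighbors_of_heavy {w : V → V → ℕ} (hsymm : ∀ u v, w u v = w v u)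
    (hn : 2 ≤ Fintype.card V) (hΔ : 1 ≤ maxDeg w) {s : Finset V} (hs : ∀ v ∈ s, Heavy w v) :
    #s ≤ #{u | ∃ v ∈ s, w v u ≠ 0} := by
  set n := Fintype.card V
  set N : Finset V := {u | ∃ v ∈ s, w v u ≠ 0}
  have hcount : #s * (n - 1) ≤ n * #N := by
    refine Nat.le_of_mul_le_mul_right ?_ hΔ
    calc #s * (n - 1) * maxDeg w = ∑ _v ∈ s, (n - 1) * maxDeg w := by
          rw [sum_const, smul_eq_mul, mul_assoc]
      _ ≤ ∑ v ∈ s, n * deg w v := sum_le_sum hs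
      _ = n * ∑ v ∈ s, deg w v := (mul_sum _ _ _).symm
      _ ≤ n * (#N * maxDeg w) := Nat.mul_le_mul_left _ <| sum_deg_le_card_mul_maxDeg hsymm
          fun v hv u hu => mem_filter.2 ⟨mem_univ u, v, hv, hu⟩
      _ = n * #N * maxDeg w := (mul_assoc _ _ _).symm
  by_contra! hlt
  -- A Hall violator must be all of `V`, but there every vertex has an edge, so `N = V`.
  have hs_univ : s = univ := by
    refine eq_univ_of_card s (le_antisymm (card_le_univ s) ?_)
    have : #s * (n - 1) + n ≤ #s * (n - 1) + #s := by
      zify [show 1 ≤ n by omega] at hcount ⊢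
      nlinarith
    omega
  have hN_univ : N = univ := by
    refine eq_univ_of_forall fun u => ?_
    obtain ⟨x, -, hx⟩ :=
      exists_ne_zero_of_sum_ne_zero (deg_ne_zero_of_heavy hn hΔ (hs u (hs_univ ▸ mem_univ u)))
    exact mem_filter.2 ⟨mem_univ u, x, hs_univ ▸ mem_univ x, hsymm x u ▸ hx⟩
  have : #N = n := by rw [hN_univ, card_univ]
  have : #s ≤ n := card_le_univ s
  omega

lemma exists_saturating_matching_of_injective {w : V → V → ℕ} (hsymm : ∀ u v, w u v = w v u)
    (hloop : ∀ v, w v v = 0) {Z : Set V} {f : V → V} (hf : Injective f)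
    (hfZ : ∀ z ∈ Z, w z (f z) ≠ 0) (hbip : BipartiteOn (support w) Z) :
    ∃ M : Finset (Sym2 V), IsMatching w M ∧ ∀ v ∈ Z, Saturates M v := by
  obtain ⟨A, hA⟩ := hbip
  obtain ⟨C, hC, hC_start⟩ := exists_alternating_set_of_injective hf (A := A)
    fun z hz hfz => hA hz hfz ((support_adj_iff hsymm hloop).2 (hfZ z hz))
  let S : Finset V := {z | z ∈ Z ∧ z ∈ C}
  have hfS : ∀ z ∈ S, f z ∉ S := by
    simp only [S, mem_filter, mem_univ, true_and]
    exact fun z ⟨hz, hzC⟩ ⟨hfz, hfzC⟩ => (hC z hz hfz).1 hzC hfzC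
  refine ⟨_, isMatching_image_of_injective hsymm hloop hf
    (fun z hz => hfZ z (mem_filter.1 hz).2.1) hfS, fun v hv => ?_⟩
  by_cases hvC : v ∈ C
  · exact ⟨s(v, f v), mem_image_of_mem _ (mem_filter.2 ⟨mem_univ v, hv, hvC⟩),
      Sym2.mem_mk_left v (f v)⟩
  · obtain ⟨y, hy, rfl⟩ : ∃ y ∈ Z, f y = v := by
      by_contra! h
      exact hvC (hC_start v hv h)
    exact ⟨s(y, f y), mem_image_of_mem _ (mem_filter.2 ⟨mem_univ y, hy, (hC y hy hv).2 hvC⟩),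
      Sym2.mem_mk_right y (f y)⟩

theorem heavy_bipartite_saturating_matching_general {V : Type} [Fintype V]
    (w : V → V → ℕ) (hsymm : ∀ u v, w u v = w v u) (hloop : ∀ v, w v v = 0)
    (hn : 2 ≤ Fintype.card V) (hΔ : 1 ≤ maxDeg w)
    (Z : Set V)
    (hheavy : ∀ v ∈ Z, (Fintype.card V - 1) * maxDeg w ≤ Fintype.card V * deg w v)
    (hbip : BipartiteOn (support w) Z) :
    ∃ M : Finset (Sym2 V), IsMatching w M ∧ ∀ v ∈ Z, Saturates M v := by
  have hall (s : Finset V) : #s ≤ #{u | ∃ v ∈ s, v ∈ Z → w v u ≠ 0} := by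
    by_cases hsZ : ∀ v ∈ s, v ∈ Z
    · calc #s ≤ #{u | ∃ v ∈ s, w v u ≠ 0} :=
            card_le_card_neighbors_of_heavy hsymm hn hΔ fun v hv => hheavy v (hsZ v hv)
        _ ≤ _ := card_le_card <|
            monotone_filter_right _ fun _ _ ⟨v, hv, hvu⟩ => ⟨v, hv, fun _ => hvu⟩
    · push Not at hsZ
      obtain ⟨v, hv, hvZ⟩ := hsZ
      refine (card_le_univ s).trans_eq (congrArg card (eq_univ_of_forall fun u => ?_)).symm
      exact mem_filter.2 ⟨mem_univ u, v, hv, fun h => (hvZ h).elim⟩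
  obtain ⟨f, hf, hfZ⟩ := (Fintype.all_card_le_filter_rel_iff_exists_injective _).1 hall
  exact exists_saturating_matching_of_injective hsymm hloop hf hfZ hbip

/-- If every vertex of `Z` is heavy and the subgraph of the support induced
by `Z` is bipartite, then some matching of `G` saturates every vertex of `Z`. -/
theorem heavy_bipartite_saturating_matching {V : Type} [Fintype V] [DecidableEq V]
    (w : V → V → ℕ) (hsymm : ∀ u v, w u v = w v u) (hloop : ∀ v, w v v = 0)
    (hn : 2 ≤ Fintype.card V) (hΔ : 1 ≤ maxDeg w)
    (Z : Set V)
    (hheavy : ∀ v ∈ Z, (Fintype.card V - 1) * maxDeg w ≤ Fintype.card V * deg w v)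
    (hbip : BipartiteOn (support w) Z) :
    ∃ M : Finset (Sym2 V), IsMatching w M ∧ ∀ v ∈ Z, Saturates M v :=
  heavy_bipartite_saturating_matching_general w hsymm hloop hn hΔ Z hheavy hbip

end NSBPaper
end

section
/- The edge multiset of every loopless multigraph G on n ≥ 2 vertices with maximum degree Δ can be partitioned into at most ⌊3Δ/2⌋ matchings; that is, there exist matchings M₁,…,M_T of G with T ≤ ⌊3Δ/2⌋ such that for every pair of vertices {u,v}, the number of indices j with {u,v} ∈ M_j equals w(u,v). -/
open scoped Classical

/-!
Shannon's argument, by induction on the number of edges with the degree bound `D` and the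
number of colours `t = ⌊3D/2⌋` fixed, so that `3D ≤ 2t + 1`. Colour all but one copy of an
edge `xy`. A vertex misses at least `t - D` colours, one more if it is an end of the uncoloured
edge. If `x` and `y` miss a common colour, use it. Otherwise some colour `β` missing at `y` is
used at `x` on an edge `xz`; recolouring `xz` by `xy` leaves `xz` uncoloured. If `x` and `z`
still miss no common colour, counting gives a colour `γ` missing at both `y` and `z`; let `α` be
missing at `x`. In the graph of the colours `α` and `γ`, whose components are paths and cycles,
`x`, `y` and `z` have degree at most one, so they do not all lie in one component. Swapping `α`
and `γ` on the component of `z` frees `α` at both ends of `xz`; otherwise swapping on the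
component of `y` frees `α` at `x` and `y`, and moving `xy` to `α` frees `β` for `xz`.
-/

namespace NSBPaper

section Leaves

variable {α : Type*} {G : SimpleGraph α}

lemma false_of_isPath_of_subsingleton_neighborSet
    (hG : ∀ v a b c, G.Adj v a → G.Adj v b → G.Adj v c → a = b ∨ a = c ∨ b = c)
    {y z : α}
    (hy : (G.neighborSet y).Subsingleton) (hz : (G.neighborSet z).Subsingleton) (hyz : y ≠ z) :
    ∀ {u x₀ : α} (p : G.Walk u y) (q : G.Walk u z), p.IsPath → q.IsPath → G.Adj x₀ u →
      x₀ ∉ p.support → x₀ ∉ q.support → False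
  | _, _, .nil, .nil, _, _, _, _, _ => hyz rfl
  | _, _, .nil, .cons h q, _, _, hadj, _, hq => by
    rw [hy hadj.symm h] at hq
    exact hq (List.mem_cons_of_mem _ q.start_mem_support)
  | _, _, .cons h p, .nil, _, _, hadj, hp, _ => by
    rw [hz hadj.symm h] at hp
    exact hp (List.mem_cons_of_mem _ p.start_mem_support)
  | u, x₀, .cons (v := u₁) h₁ p, .cons (v := v₁) h₂ q, hpath, hqpath, hadj, hp, hq => by
    rw [SimpleGraph.Walk.cons_isPath_iff] at hpath hqpath
    have hx₀u₁ : x₀ ≠ u₁ := by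
      rintro rfl
      exact hp (List.mem_cons_of_mem _ p.start_mem_support)
    have hx₀v₁ : x₀ ≠ v₁ := by
      rintro rfl
      exact hq (List.mem_cons_of_mem _ q.start_mem_support)
    obtain rfl : u₁ = v₁ :=
      ((hG u x₀ u₁ v₁ hadj.symm h₁ h₂).resolve_left hx₀u₁).resolve_left hx₀v₁
    exact false_of_isPath_of_subsingleton_neighborSet hG hy hz hyz p q hpath.1 hqpath.1 h₁
      hpath.2 hqpath.2

lemma eq_or_eq_or_eq_of_reachable_of_subsingleton_neighborSet
    (hG : ∀ v a b c, G.Adj v a → G.Adj v b → G.Adj v c → a = b ∨ a = c ∨ b = c)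
    {x y z : α}
    (hx : (G.neighborSet x).Subsingleton) (hy : (G.neighborSet y).Subsingleton)
    (hz : (G.neighborSet z).Subsingleton) (hxy : G.Reachable x y) (hxz : G.Reachable x z) :
    x = y ∨ x = z ∨ y = z := by
  by_contra! hne
  obtain ⟨p, hp⟩ := hxy.exists_isPath
  obtain ⟨q, hq⟩ := hxz.exists_isPath
  cases p with
  | nil => exact hne.1 rfl
  | cons h₁ p =>
    cases q with
    | nil => exact hne.2.1 rfl
    | cons h₂ q =>
      rw [SimpleGraph.Walk.cons_isPath_iff] at hp hq
      obtain rfl := hx h₁ h₂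
      exact false_of_isPath_of_subsingleton_neighborSet hG hy hz hne.2.2 p q hp.1 hq.1 h₁
        hp.2 hq.2

end Leaves

variable {V : Type}

lemma saturates_iff_exists_mk_mem {M : Finset (Sym2 V)} {v : V} :
    Saturates M v ↔ ∃ u, s(v, u) ∈ M := by
  constructor
  · rintro ⟨e, he, hv⟩
    obtain ⟨u, rfl⟩ := Sym2.mem_iff_exists.mp hv
    exact ⟨u, he⟩
  · rintro ⟨u, hu⟩
    exact ⟨_, hu, Sym2.mem_mk_left v u⟩

noncomputable def missing {t : ℕ} (M : Fin t → Finset (Sym2 V)) (v : V) : Finset (Fin t) :=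
  Finset.univ.filter fun j => ¬ Saturates (M j) v

@[simp]
lemma mem_missing {t : ℕ} {M : Fin t → Finset (Sym2 V)} {v : V} {j : Fin t} :
    j ∈ missing M v ↔ ¬ Saturates (M j) v := by
  simp [missing]

namespace IsMatching

variable {w : V → V → ℕ} {M : Finset (Sym2 V)}

lemma mono {w' : V → V → ℕ} (h : ∀ u v, w u v ≤ w' u v) (hM : IsMatching w M) :
    IsMatching w' M :=
  ⟨hM.1, fun u v huv => (hM.2.1 u v huv).trans (h u v), hM.2.2⟩

lemma eq_of_mem {e f : Sym2 V} {v : V} (hM : IsMatching w M) (he : e ∈ M) (hf : f ∈ M)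
    (hve : v ∈ e) (hvf : v ∈ f) : e = f := by
  by_contra hne
  exact hM.2.2 e he f hf hne v hve hvf

lemma subset {M' : Finset (Sym2 V)} (h : M' ⊆ M) (hM : IsMatching w M) : IsMatching w M' :=
  ⟨fun e he => hM.1 e (h he), fun u v huv => hM.2.1 u v (h huv),
    fun e he f hf => hM.2.2 e (h he) f (h hf)⟩

lemma insert [DecidableEq V] (hM : IsMatching w M) {x y : V} (hxy : x ≠ y)
    (hx : ¬ Saturates M x) (hy : ¬ Saturates M y) (hwxy : 1 ≤ w x y) (hwyx : 1 ≤ w y x) :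
    IsMatching w (insert s(x, y) M) := by
  have hfree : ∀ f ∈ M, ∀ v ∈ s(x, y), v ∉ f := by
    rintro f hf v hv hvf
    rcases Sym2.mem_iff.mp hv with rfl | rfl
    exacts [hx ⟨f, hf, hvf⟩, hy ⟨f, hf, hvf⟩]
  refine ⟨?_, ?_, ?_⟩
  · simp only [Finset.mem_insert, forall_eq_or_imp, Sym2.mk_isDiag_iff]
    exact ⟨hxy, hM.1⟩
  · intro u v huv
    rcases Finset.mem_insert.mp huv with h | h
    · rcases Sym2.eq_iff.mp h with ⟨rfl, rfl⟩ | ⟨rfl, rfl⟩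
      exacts [hwxy, hwyx]
    · exact hM.2.1 u v h
  · intro e he f hf hef v hve hvf
    rcases Finset.mem_insert.mp he with rfl | he <;> rcases Finset.mem_insert.mp hf with rfl | hf
    · exact hef rfl
    · exact hfree f hf v hve hvf
    · exact hfree e he v hvf hve
    · exact hM.2.2 e he f hf hef v hve hvf

lemma eq_of_mk_mem (hM : IsMatching w M) {v a b : V} (ha : s(v, a) ∈ M) (hb : s(v, b) ∈ M) :
    a = b :=
  Sym2.congr_right.mp (hM.eq_of_mem ha hb (Sym2.mem_mk_left v a) (Sym2.mem_mk_left v b))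

end IsMatching

variable [DecidableEq V]

lemma IsMatching.not_saturates_erase {w : V → V → ℕ} {M : Finset (Sym2 V)}
    (hM : IsMatching w M) {e : Sym2 V} {v : V} (he : e ∈ M) (hv : v ∈ e) :
    ¬ Saturates (M.erase e) v := by
  rintro ⟨f, hf, hvf⟩
  exact Finset.ne_of_mem_erase hf (hM.eq_of_mem he (Finset.mem_of_mem_erase hf) hv hvf).symm

lemma IsMatching.sdiff_union_inter {w : V → V → ℕ} {A B C : Finset (Sym2 V)}
    (hA : IsMatching w A) (hB : IsMatching w B)
    (hC : ∀ e ∈ A ∪ B, ∀ f ∈ A ∪ B, ∀ v ∈ e, v ∈ f → (e ∈ C ↔ f ∈ C)) :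
    IsMatching w ((A \ C) ∪ (B ∩ C)) := by
  have hsub : (A \ C) ∪ (B ∩ C) ⊆ A ∪ B :=
    Finset.union_subset_union Finset.sdiff_subset Finset.inter_subset_left
  refine ⟨fun e he => ?_, fun u v huv => ?_, fun e he f hf hef v hve hvf => ?_⟩
  · rcases Finset.mem_union.mp (hsub he) with h | h
    exacts [hA.1 e h, hB.1 e h]
  · rcases Finset.mem_union.mp (hsub huv) with h | h
    exacts [hA.2.1 u v h, hB.2.1 u v h]
  · have hCef := hC e (hsub he) f (hsub hf) v hve hvf
    simp only [Finset.mem_union, Finset.mem_sdiff, Finset.mem_inter] at he hf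
    rcases he with ⟨he, heC⟩ | ⟨he, heC⟩ <;> rcases hf with ⟨hf, hfC⟩ | ⟨hf, hfC⟩
    · exact hA.2.2 e he f hf hef v hve hvf
    · exact heC (hCef.mpr hfC)
    · exact hfC (hCef.mp heC)
    · exact hB.2.2 e he f hf hef v hve hvf

lemma sum_ite_mk_eq [Fintype V] (v : V) (e : Sym2 V) :
    (∑ u, if s(v, u) = e then 1 else 0) = if v ∈ e then 1 else 0 := by
  by_cases hv : v ∈ e
  · obtain ⟨v', rfl⟩ := Sym2.mem_iff_exists.mp hv
    simp only [Sym2.congr_right, Finset.sum_ite_eq', Finset.mem_univ, if_true, Sym2.mem_mk_left]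
  · rw [if_neg hv]
    refine Finset.sum_eq_zero fun u _ => if_neg ?_
    rintro rfl
    exact hv (Sym2.mem_mk_left v u)

section Colorings

variable {t : ℕ}

noncomputable def classCount (M : Fin t → Finset (Sym2 V)) (e : Sym2 V) : ℕ :=
  (Finset.univ.filter fun j => e ∈ M j).card

lemma classCount_update (M : Fin t → Finset (Sym2 V)) (c : Fin t) (S : Finset (Sym2 V))
    (e : Sym2 V) :
    classCount (Function.update M c S) e + (if e ∈ M c then 1 else 0)
      = classCount M e + (if e ∈ S then 1 else 0) := by
  simp only [classCount, Finset.card_filter]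
  rw [← Finset.add_sum_erase _ _ (Finset.mem_univ c),
    ← Finset.add_sum_erase _ _ (Finset.mem_univ c),
    Finset.sum_congr rfl fun j hj => by rw [Function.update_of_ne (Finset.ne_of_mem_erase hj)],
    Function.update_self]
  omega

lemma classCount_comp_perm (M : Fin t → Finset (Sym2 V)) (σ : Equiv.Perm (Fin t)) (e : Sym2 V) :
    classCount (M ∘ σ) e = classCount M e := by
  simp only [classCount, Finset.card_filter, Function.comp]
  exact Equiv.sum_comp σ (fun j => if e ∈ M j then 1 else 0)

/-- `M` is an edge colouring of the multigraph `w` with `t` colours in which the single copy `e`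
of an edge is left uncoloured. -/
structure ColorsAllBut (w : V → V → ℕ) (M : Fin t → Finset (Sym2 V)) (e : Sym2 V) :
    Prop where
  isMatching : ∀ j, IsMatching w (M j)
  classCount_add : ∀ u v, classCount M s(u, v) + (if s(u, v) = e then 1 else 0) = w u v

namespace ColorsAllBut

variable {w : V → V → ℕ} {M : Fin t → Finset (Sym2 V)} {e : Sym2 V}

lemma one_le (hM : ColorsAllBut w M e) {u v : V} (huv : s(u, v) = e) : 1 ≤ w u v := by
  have := hM.classCount_add u v
  rw [if_pos huv] at this
  omega

lemma canEvacuate_of_not_saturates {a b : V} (hM : ColorsAllBut w M s(a, b)) (hab : a ≠ b)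
    {c : Fin t} (ha : ¬ Saturates (M c) a) (hb : ¬ Saturates (M c) b) : CanEvacuate w t := by
  refine ⟨Function.update M c (insert s(a, b) (M c)), ?_, fun u v => ?_⟩
  · refine (Function.forall_update_iff M fun _ S => IsMatching w S).mpr
      ⟨?_, fun j _ => hM.isMatching j⟩
    exact (hM.isMatching c).insert hab ha hb (hM.one_le rfl) (hM.one_le Sym2.eq_swap)
  · have hupd := classCount_update M c (insert s(a, b) (M c)) s(u, v)
    have hcount := hM.classCount_add u v
    change classCount _ s(u, v) = w u v
    by_cases he : s(u, v) = s(a, b)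
    · have hnot : s(u, v) ∉ M c := he ▸ fun h => ha ⟨_, h, Sym2.mem_mk_left a b⟩
      rw [if_neg hnot, if_pos (he ▸ Finset.mem_insert_self _ _)] at hupd
      rw [if_pos he] at hcount
      omega
    · simp only [he, if_false, Finset.mem_insert, false_or] at hupd hcount
      omega

lemma exchange {x y z : V} {c : Fin t} (hM : ColorsAllBut w M s(x, y)) (hxz : s(x, z) ∈ M c)
    (hy : ¬ Saturates (M c) y) :
    ColorsAllBut w (Function.update M c (insert s(x, y) ((M c).erase s(x, z)))) s(x, z) := by
  have hyc : ∀ f ∈ M c, y ∉ f := fun f hf hyf => hy ⟨f, hf, hyf⟩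
  have hxy : x ≠ y := by rintro rfl; exact hyc _ hxz (Sym2.mem_mk_left _ _)
  have hyz : y ≠ z := by rintro rfl; exact hyc _ hxz (Sym2.mem_mk_right _ _)
  have hne : s(x, y) ≠ s(x, z) := fun h => hyz (Sym2.congr_right.mp h)
  have hxy_notMem : s(x, y) ∉ M c := fun h => hyc _ h (Sym2.mem_mk_right _ _)
  constructor
  · refine (Function.forall_update_iff M fun _ S => IsMatching w S).mpr
      ⟨?_, fun j _ => hM.isMatching j⟩
    refine ((hM.isMatching c).subset (Finset.erase_subset _ _)).insert hxy
      ((hM.isMatching c).not_saturates_erase hxz (Sym2.mem_mk_left x z)) ?_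
      (hM.one_le rfl) (hM.one_le Sym2.eq_swap)
    rintro ⟨f, hf, hyf⟩
    exact hyc f (Finset.mem_of_mem_erase hf) hyf
  · intro u v
    have hupd := classCount_update M c (insert s(x, y) ((M c).erase s(x, z))) s(u, v)
    have hcount := hM.classCount_add u v
    have hswap : (if s(u, v) ∈ insert s(x, y) ((M c).erase s(x, z)) then 1 else 0)
        + (if s(u, v) = s(x, z) then 1 else 0)
        = (if s(u, v) ∈ M c then 1 else 0) + (if s(u, v) = s(x, y) then 1 else 0) := by
      by_cases h₁ : s(u, v) = s(x, y)
      · rw [h₁]; simp [hne, hxy_notMem]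
      by_cases h₂ : s(u, v) = s(x, z)
      · rw [h₂]; simp [hne.symm, hxz]
      simp [h₁, h₂]
    omega

lemma card_add_le [Fintype V] (hM : ColorsAllBut w M e) (v : V) :
    t + (if v ∈ e then 1 else 0) ≤ (missing M v).card + deg w v := by
  have hsat :
      (Finset.univ.filter fun j => Saturates (M j) v).card ≤ ∑ u, classCount M s(v, u) :=
    calc _ ≤ (Finset.univ.biUnion fun u => Finset.univ.filter fun j => s(v, u) ∈ M j).card :=
          Finset.card_le_card fun j => by simp [saturates_iff_exists_mk_mem]
      _ ≤ _ := Finset.card_biUnion_le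
  have hdeg : ∑ u, classCount M s(v, u) + (if v ∈ e then 1 else 0) = deg w v := by
    rw [← sum_ite_mk_eq, ← Finset.sum_add_distrib]
    exact Finset.sum_congr rfl fun u _ => hM.classCount_add v u
  have hsplit : (missing M v).card + (Finset.univ.filter fun j => Saturates (M j) v).card = t := by
    rw [missing, add_comm, Finset.card_filter_add_card_filter_not, Finset.card_univ,
      Fintype.card_fin]
  omega

end ColorsAllBut

end Colorings

section Kempe

variable {w : V → V → ℕ} {A B : Finset (Sym2 V)}

def kempeGraph (A B : Finset (Sym2 V)) : SimpleGraph V :=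
  SimpleGraph.fromEdgeSet ↑(A ∪ B)

lemma kempeGraph_adj {u v : V} :
    (kempeGraph A B).Adj u v ↔ (s(u, v) ∈ A ∨ s(u, v) ∈ B) ∧ u ≠ v := by
  simp [kempeGraph, or_and_right]

lemma kempeGraph_comm : kempeGraph A B = kempeGraph B A := by
  rw [kempeGraph, kempeGraph, Finset.union_comm]

lemma kempeGraph_adj_three (hA : IsMatching w A) (hB : IsMatching w B) (v a b c : V)
    (ha : (kempeGraph A B).Adj v a) (hb : (kempeGraph A B).Adj v b)
    (hc : (kempeGraph A B).Adj v c) : a = b ∨ a = c ∨ b = c := by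
  rw [kempeGraph_adj] at ha hb hc
  rcases ha.1 with ha | ha <;> rcases hb.1 with hb | hb <;> rcases hc.1 with hc | hc
  all_goals first
    | exact Or.inl (hA.eq_of_mk_mem ha hb) | exact Or.inl (hB.eq_of_mk_mem ha hb)
    | exact Or.inr (Or.inl (hA.eq_of_mk_mem ha hc)) | exact Or.inr (Or.inl (hB.eq_of_mk_mem ha hc))
    | exact Or.inr (Or.inr (hA.eq_of_mk_mem hb hc)) | exact Or.inr (Or.inr (hB.eq_of_mk_mem hb hc))

lemma neighborSet_kempeGraph_subsingleton (hB : IsMatching w B) {v : V}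
    (hv : ¬ Saturates A v) : ((kempeGraph A B).neighborSet v).Subsingleton := by
  have hAv : ∀ {u}, s(v, u) ∉ A := fun h => hv (saturates_iff_exists_mk_mem.mpr ⟨_, h⟩)
  intro a ha b hb
  rw [SimpleGraph.mem_neighborSet, kempeGraph_adj] at ha hb
  exact hB.eq_of_mk_mem (ha.1.resolve_left hAv) (hb.1.resolve_left hAv)

noncomputable def kempeChain (A B : Finset (Sym2 V)) (p : V) : Finset (Sym2 V) :=
  (A ∪ B).filter fun e => ∃ v ∈ e, (kempeGraph A B).Reachable p v

lemma kempeChain_comm (p : V) : kempeChain A B p = kempeChain B A p := by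
  rw [kempeChain, kempeChain, kempeGraph_comm, Finset.union_comm]

lemma mem_kempeChain_iff {p v : V} {e : Sym2 V} (he : e ∈ A ∪ B) (hv : v ∈ e) :
    e ∈ kempeChain A B p ↔ (kempeGraph A B).Reachable p v := by
  refine ⟨fun h => ?_, fun h => Finset.mem_filter.mpr ⟨he, v, hv, h⟩⟩
  obtain ⟨-, u, hu, hpu⟩ := Finset.mem_filter.mp h
  by_cases huv : u = v
  · exact huv ▸ hpu
  · refine hpu.trans (SimpleGraph.Adj.reachable ?_)
    rw [kempeGraph, SimpleGraph.fromEdgeSet_adj, ← (Sym2.mem_and_mem_iff huv).mp ⟨hu, hv⟩]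
    exact ⟨he, huv⟩

lemma kempeChain_closed (p : V) :
    ∀ e ∈ A ∪ B, ∀ f ∈ A ∪ B, ∀ v ∈ e, v ∈ f →
      (e ∈ kempeChain A B p ↔ f ∈ kempeChain A B p) :=
  fun _ he _ hf _ hve hvf => (mem_kempeChain_iff he hve).trans (mem_kempeChain_iff hf hvf).symm

variable {t : ℕ}

/-- Exchange the colours `α` and `γ` on the Kempe chain through `p`. -/
noncomputable def kempeSwap (M : Fin t → Finset (Sym2 V)) (α γ : Fin t) (p : V) :
    Fin t → Finset (Sym2 V) :=
  fun j => (M j \ kempeChain (M α) (M γ) p) ∪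
    (M (Equiv.swap α γ j) ∩ kempeChain (M α) (M γ) p)

variable {M : Fin t → Finset (Sym2 V)} {α γ : Fin t} {p : V}

lemma kempeSwap_of_ne {j : Fin t} (hα : j ≠ α) (hγ : j ≠ γ) :
    kempeSwap M α γ p j = M j := by
  rw [kempeSwap, Equiv.swap_apply_of_ne_of_ne hα hγ, Finset.sdiff_union_inter]

lemma classCount_kempeSwap (e : Sym2 V) : classCount (kempeSwap M α γ p) e = classCount M e := by
  by_cases he : e ∈ kempeChain (M α) (M γ) p
  · rw [← classCount_comp_perm M (Equiv.swap α γ)]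
    simp [classCount, kempeSwap, he]
  · simp [classCount, kempeSwap, he]

lemma isMatching_kempeSwap (hM : ∀ j, IsMatching w (M j)) (j : Fin t) :
    IsMatching w (kempeSwap M α γ p j) := by
  by_cases hα : j = α
  · subst hα
    rw [kempeSwap, Equiv.swap_apply_left]
    exact (hM j).sdiff_union_inter (hM γ) (kempeChain_closed p)
  by_cases hγ : j = γ
  · subst hγ
    rw [kempeSwap, Equiv.swap_apply_right, kempeChain_comm]
    exact (hM j).sdiff_union_inter (hM α) (kempeChain_closed p)
  rw [kempeSwap_of_ne hα hγ]
  exact hM j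

lemma saturates_kempeSwap_of_reachable {v : V} (hv : (kempeGraph (M α) (M γ)).Reachable p v) :
    Saturates (kempeSwap M α γ p α) v ↔ Saturates (M γ) v := by
  have hC : ∀ e ∈ M α ∪ M γ, v ∈ e → e ∈ kempeChain (M α) (M γ) p :=
    fun e he hve => (mem_kempeChain_iff he hve).mpr hv
  rw [kempeSwap, Equiv.swap_apply_left]
  constructor
  · rintro ⟨e, he, hve⟩
    simp only [Finset.mem_union, Finset.mem_sdiff, Finset.mem_inter] at he
    rcases he with ⟨he, heC⟩ | ⟨he, -⟩
    · exact absurd (hC e (Finset.mem_union_left _ he) hve) heC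
    · exact ⟨e, he, hve⟩
  · rintro ⟨e, he, hve⟩
    exact ⟨e, Finset.mem_union_right _
      (Finset.mem_inter.mpr ⟨he, hC e (Finset.mem_union_right _ he) hve⟩), hve⟩

lemma saturates_kempeSwap_of_not_reachable {v : V}
    (hv : ¬ (kempeGraph (M α) (M γ)).Reachable p v) :
    Saturates (kempeSwap M α γ p α) v ↔ Saturates (M α) v := by
  have hC : ∀ e ∈ M α ∪ M γ, v ∈ e → e ∉ kempeChain (M α) (M γ) p :=
    fun e he hve hC => hv ((mem_kempeChain_iff he hve).mp hC)
  rw [kempeSwap, Equiv.swap_apply_left]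
  constructor
  · rintro ⟨e, he, hve⟩
    simp only [Finset.mem_union, Finset.mem_sdiff, Finset.mem_inter] at he
    rcases he with ⟨he, -⟩ | ⟨he, heC⟩
    · exact ⟨e, he, hve⟩
    · exact absurd heC (hC e (Finset.mem_union_right _ he) hve)
  · rintro ⟨e, he, hve⟩
    exact ⟨e, Finset.mem_union_left _
      (Finset.mem_sdiff.mpr ⟨he, hC e (Finset.mem_union_left _ he) hve⟩), hve⟩

lemma colorsAllBut_kempeSwap {e : Sym2 V} (hM : ColorsAllBut w M e) (α γ : Fin t) (p : V) :
    ColorsAllBut w (kempeSwap M α γ p) e :=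
  ⟨isMatching_kempeSwap hM.isMatching, fun u v => by
    rw [classCount_kempeSwap]
    exact hM.classCount_add u v⟩

lemma ColorsAllBut.exists_not_saturates_of_not_reachable {e : Sym2 V} (hM : ColorsAllBut w M e)
    {v x : V} (hv : ¬ Saturates (M γ) v) (hx : ¬ Saturates (M α) x)
    (hvx : ¬ (kempeGraph (M α) (M γ)).Reachable v x) :
    ∃ M', ColorsAllBut w M' e ∧ ¬ Saturates (M' α) v ∧ ¬ Saturates (M' α) x ∧
      ∀ j, j ≠ α → j ≠ γ → M' j = M j :=
  ⟨kempeSwap M α γ v, colorsAllBut_kempeSwap hM α γ v,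
    by rwa [saturates_kempeSwap_of_reachable (.refl v)],
    by rwa [saturates_kempeSwap_of_not_reachable hvx], fun _ hα hγ => kempeSwap_of_ne hα hγ⟩

end Kempe

section Shannon

variable [Fintype V] {t D : ℕ} {w : V → V → ℕ} {M : Fin t → Finset (Sym2 V)} {x y z : V}

lemma ColorsAllBut.inter_missing_nonempty (hM : ColorsAllBut w M s(x, z))
    (hdeg : ∀ v, deg w v ≤ D) (ht : 3 * D ≤ 2 * t + 1)
    (hXY : Disjoint (missing M x) (missing M y)) (hXZ : Disjoint (missing M x) (missing M z)) :
    (missing M y ∩ missing M z).Nonempty := by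
  have hx := hM.card_add_le x
  have hy := hM.card_add_le y
  have hz := hM.card_add_le z
  rw [if_pos (Sym2.mem_mk_left x z)] at hx
  rw [if_pos (Sym2.mem_mk_right x z)] at hz
  have hunion := Finset.card_union_of_disjoint (Finset.disjoint_union_right.mpr ⟨hXY, hXZ⟩)
  have huniv := Finset.card_le_univ (missing M x ∪ (missing M y ∪ missing M z))
  have hinter := Finset.card_union_add_card_inter (missing M y) (missing M z)
  rw [Fintype.card_fin] at huniv
  have := hdeg x; have := hdeg y; have := hdeg z
  rw [← Finset.card_pos]
  omega

lemma ColorsAllBut.canEvacuate_of_disjoint_missing (hM : ColorsAllBut w M s(x, z))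
    (hdeg : ∀ v, deg w v ≤ D) (ht : 3 * D ≤ 2 * t + 1)
    (hxy : x ≠ y) (hxz : x ≠ z) (hyz : y ≠ z)
    {β : Fin t} (hβ : s(x, y) ∈ M β) (hβz : ¬ Saturates (M β) z)
    (hXY : Disjoint (missing M x) (missing M y)) : CanEvacuate w t := by
  by_cases hXZ : Disjoint (missing M x) (missing M z)
  swap
  · obtain ⟨c, hcx, hcz⟩ := Finset.not_disjoint_iff.mp hXZ
    exact hM.canEvacuate_of_not_saturates hxz (mem_missing.mp hcx) (mem_missing.mp hcz)
  obtain ⟨γ, hγ⟩ := hM.inter_missing_nonempty hdeg ht hXY hXZ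
  obtain ⟨hγy, hγz⟩ : ¬ Saturates (M γ) y ∧ ¬ Saturates (M γ) z := by
    simpa using hγ
  obtain ⟨α, hα⟩ : (missing M x).Nonempty := by
    have := hM.card_add_le x
    have := hdeg x
    rw [if_pos (Sym2.mem_mk_left x z)] at *
    rw [← Finset.card_pos]
    omega
  have hαx : ¬ Saturates (M α) x := mem_missing.mp hα
  have hαβ : α ≠ β := by rintro rfl; exact hαx ⟨_, hβ, Sym2.mem_mk_left x y⟩
  have hγβ : γ ≠ β := by rintro rfl; exact hγy ⟨_, hβ, Sym2.mem_mk_right x y⟩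
  have hleaf : ∀ {v}, ¬ Saturates (M γ) v →
      ((kempeGraph (M α) (M γ)).neighborSet v).Subsingleton := fun hv =>
    kempeGraph_comm (A := M α) ▸ neighborSet_kempeGraph_subsingleton (hM.isMatching α) hv
  have hends := eq_or_eq_or_eq_of_reachable_of_subsingleton_neighborSet
    (kempeGraph_adj_three (hM.isMatching α) (hM.isMatching γ))
    (neighborSet_kempeGraph_subsingleton (hM.isMatching γ) hαx) (hleaf hγy) (hleaf hγz)
  by_cases hzx : (kempeGraph (M α) (M γ)).Reachable z x
  · have hyx : ¬ (kempeGraph (M α) (M γ)).Reachable y x := fun hyx => by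
      rcases hends hyx.symm hzx.symm with h | h | h <;> contradiction
    obtain ⟨M', hM', hαy', hαx', hM'_eq⟩ :=
      hM.exists_not_saturates_of_not_reachable hγy hαx hyx
    rw [← hM'_eq β hαβ.symm hγβ.symm] at hβ hβz
    refine (hM'.exchange hβ hβz).canEvacuate_of_not_saturates hxy (c := α) ?_ ?_ <;>
      rwa [Function.update_of_ne hαβ]
  · obtain ⟨M', hM', hαz', hαx', -⟩ := hM.exists_not_saturates_of_not_reachable hγz hαx hzx
    exact hM'.canEvacuate_of_not_saturates hxz hαx' hαz'

lemma ColorsAllBut.canEvacuate (hM : ColorsAllBut w M s(x, y)) (hxy : x ≠ y)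
    (hdeg : ∀ v, deg w v ≤ D) (ht : 3 * D ≤ 2 * t + 1) : CanEvacuate w t := by
  by_cases hXY : Disjoint (missing M x) (missing M y)
  swap
  · obtain ⟨c, hcx, hcy⟩ := Finset.not_disjoint_iff.mp hXY
    exact hM.canEvacuate_of_not_saturates hxy (mem_missing.mp hcx) (mem_missing.mp hcy)
  obtain ⟨β, hβy⟩ : (missing M y).Nonempty := by
    have := hM.card_add_le y
    have := hdeg y
    rw [if_pos (Sym2.mem_mk_right x y)] at *
    rw [← Finset.card_pos]
    omega
  have hβx : Saturates (M β) x := by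
    simpa using Finset.disjoint_right.mp hXY hβy
  obtain ⟨z, hxz⟩ := saturates_iff_exists_mk_mem.mp hβx
  have hyβ : ¬ Saturates (M β) y := mem_missing.mp hβy
  have hxz_ne : x ≠ z := fun h => (hM.isMatching β).1 _ hxz (Sym2.mk_isDiag_iff.mpr h)
  have hyz : y ≠ z := by rintro rfl; exact hyβ ⟨_, hxz, Sym2.mem_mk_right x y⟩
  set N := Function.update M β (insert s(x, y) ((M β).erase s(x, z)))
  have hNβ : s(x, y) ∈ N β := by simp [N]
  have hNβz : ¬ Saturates (N β) z := by
    rintro ⟨f, hf, hzf⟩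
    simp only [N, Function.update_self, Finset.mem_insert] at hf
    rcases hf with rfl | hf
    · rcases Sym2.mem_iff.mp hzf with rfl | rfl
      exacts [hxz_ne rfl, hyz rfl]
    · exact (hM.isMatching β).not_saturates_erase hxz (Sym2.mem_mk_right x z) ⟨f, hf, hzf⟩
  have hNXY : Disjoint (missing N x) (missing N y) := by
    refine Finset.disjoint_left.mpr fun j hjx hjy => ?_
    rcases eq_or_ne j β with rfl | hj
    · exact mem_missing.mp hjx ⟨_, hNβ, Sym2.mem_mk_left x y⟩
    · simp only [mem_missing, N, Function.update_of_ne hj] at hjx hjy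
      exact Finset.disjoint_left.mp hXY (mem_missing.mpr hjx) (mem_missing.mpr hjy)
  exact (hM.exchange hxz hyβ).canEvacuate_of_disjoint_missing hdeg ht hxy hxz_ne hyz
    hNβ hNβz hNXY

end Shannon

lemma removeMatching_symm {w : V → V → ℕ} (hsymm : ∀ u v, w u v = w v u)
    (M : Finset (Sym2 V)) (u v : V) : removeMatching w M u v = removeMatching w M v u := by
  simp only [removeMatching, Sym2.eq_swap (a := u), hsymm u v]

lemma removeMatching_le (w : V → V → ℕ) (M : Finset (Sym2 V)) (u v : V) :
    removeMatching w M u v ≤ w u v := by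
  unfold removeMatching
  split_ifs <;> omega

lemma removeMatching_singleton_add {w : V → V → ℕ}
    (hsymm : ∀ u v, w u v = w v u) {x y : V} (hxy : 1 ≤ w x y) (u v : V) :
    removeMatching w {s(x, y)} u v + (if s(u, v) = s(x, y) then 1 else 0) = w u v := by
  simp only [removeMatching, Finset.mem_singleton]
  split_ifs with h
  · rcases Sym2.eq_iff.mp h with ⟨rfl, rfl⟩ | ⟨rfl, rfl⟩
    · omega
    · rw [hsymm] at hxy
      omega
  · rfl

theorem canEvacuate_of_deg_le [Fintype V] {D : ℕ} {w : V → V → ℕ}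
    (hsymm : ∀ u v, w u v = w v u) (hloop : ∀ v, w v v = 0) (hdeg : ∀ v, deg w v ≤ D) :
    CanEvacuate w (3 * D / 2) := by
  induction h : ∑ u, ∑ v, w u v using Nat.strong_induction_on generalizing w with
  | _ n ih =>
  by_cases hw : ∀ u v, w u v = 0
  · exact ⟨fun _ => ∅, fun _ => ⟨by simp, by simp, by simp⟩, fun u v => by simp [hw]⟩
  push Not at hw
  obtain ⟨x, y, hwxy⟩ := hw
  have hxy : x ≠ y := by rintro rfl; exact hwxy (hloop x)
  set w' := removeMatching w {s(x, y)}
  have hlt : ∑ u, ∑ v, w' u v < n := h ▸ Finset.sum_lt_sum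
    (fun u _ => Finset.sum_le_sum fun v _ => removeMatching_le w _ u v)
    ⟨x, Finset.mem_univ x, Finset.sum_lt_sum (fun v _ => removeMatching_le w _ x v)
      ⟨y, Finset.mem_univ y, by
        simp only [w', removeMatching, Finset.mem_singleton, if_true]
        omega⟩⟩
  obtain ⟨M, hM, hcount⟩ := ih _ hlt (removeMatching_symm hsymm _)
    (fun v => Nat.le_zero.mp (hloop v ▸ removeMatching_le w _ v v))
    (fun v => (Finset.sum_le_sum fun u _ => removeMatching_le w _ v u).trans (hdeg v)) rfl
  have hM' : ColorsAllBut w M s(x, y) := ⟨fun j => (hM j).mono (removeMatching_le w _),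
    fun u v => by
      rw [← removeMatching_singleton_add hsymm (Nat.one_le_iff_ne_zero.mpr hwxy) u v,
        ← hcount u v]
      rfl⟩
  exact hM'.canEvacuate hxy hdeg (by omega)

theorem shannon_edge_coloring_general {V : Type} [Fintype V] [DecidableEq V]
    (w : V → V → ℕ) (hsymm : ∀ u v, w u v = w v u) (hloop : ∀ v, w v v = 0) :
    ∃ T : ℕ, T ≤ 3 * maxDeg w / 2 ∧ CanEvacuate w T :=
  ⟨_, le_rfl, canEvacuate_of_deg_le hsymm hloop fun v => Finset.le_sup (Finset.mem_univ v)⟩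

/-- The edge multiset of every loopless multigraph on `n ≥ 2` vertices with
maximum degree `Δ` can be partitioned into at most `⌊3Δ/2⌋` matchings. -/
theorem shannon_edge_coloring {V : Type} [Fintype V] [DecidableEq V]
    (w : V → V → ℕ) (hsymm : ∀ u v, w u v = w v u) (hloop : ∀ v, w v v = 0)
    (hn : 2 ≤ Fintype.card V) :
    ∃ T : ℕ, T ≤ 3 * maxDeg w / 2 ∧ CanEvacuate w T :=
  shannon_edge_coloring_general w hsymm hloop

end NSBPaper
end

section
/- Let G be a loopless multigraph with maximum degree Δ ≥ 1 whose support is bipartite. Then there exists a matching of G that saturates every vertex of maximum degree Δ. -/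
open scoped Classical

namespace NSBPaper

variable {V : Type} [Fintype V] [DecidableEq V]

/-!
Add `Δ - d(v)` parallel edges between the two copies of each vertex `v` in the bipartite double
cover of `G`. The result is `Δ`-regular, so by Hall's theorem it has a perfect matching, that is,
a permutation `σ` of `V` such that each `v` is joined to `σ v`. A vertex of degree `Δ` received no
extra edges, so `σ` moves it along an edge of `G`. If `A` is one side of a bipartition of `G`,
then `σ` maps the points of `A` it moves out of `A`, so the edges `{a, σ a}` with `a ∈ A`, `σ a ≠ a`
form a matching covering every point moved by `σ`.
-/

open Finset

theorem exists_perm_forall_pos_of_sum_eq_of_sum_le {n : Type*} [Fintype n] [DecidableEq n]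
    (m : n → n → ℕ) {Δ : ℕ} (hΔ : 0 < Δ) (hrow : ∀ i, ∑ j, m i j = Δ) (hcol : ∀ j, ∑ i, m i j ≤ Δ) :
    ∃ σ : Equiv.Perm n, ∀ i, 0 < m i (σ i) := by
  let N (i : n) : Finset n := {j | m i j ≠ 0}
  have hrowN (i : n) : ∑ j ∈ N i, m i j = Δ := by rw [← hrow i, sum_filter_ne_zero]
  have hall (s : Finset n) : #s ≤ #(s.biUnion N) := by
    refine Nat.le_of_mul_le_mul_right ?_ hΔ
    calc #s * Δ = ∑ i ∈ s, ∑ j ∈ N i, m i j := by simp [hrowN]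
      _ ≤ ∑ i ∈ s, ∑ j ∈ s.biUnion N, m i j :=
        sum_le_sum fun i hi => sum_le_sum_of_subset (subset_biUnion_of_mem N hi)
      _ = ∑ j ∈ s.biUnion N, ∑ i ∈ s, m i j := sum_comm
      _ ≤ ∑ j ∈ s.biUnion N, Δ :=
        sum_le_sum fun j _ => (sum_le_sum_of_subset (subset_univ s)).trans (hcol j)
      _ = #(s.biUnion N) * Δ := by simp
  obtain ⟨f, hf, hfN⟩ := (all_card_le_biUnion_card_iff_exists_injective N).1 hall
  exact ⟨Equiv.ofBijective f (Finite.injective_iff_bijective.1 hf),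
    fun i => by simpa [N, pos_iff_ne_zero] using hfN i⟩

def padToRegular (w : V → V → ℕ) (Δ : ℕ) (u v : V) : ℕ :=
  w u v + if u = v then Δ - deg w u else 0

theorem sum_padToRegular {w : V → V → ℕ} {Δ : ℕ} {u : V} (hu : deg w u ≤ Δ) :
    ∑ v, padToRegular w Δ u v = Δ := by
  simp only [padToRegular, sum_add_distrib, sum_ite_eq, mem_univ, if_true]
  exact Nat.add_sub_of_le hu

theorem padToRegular_comm {w : V → V → ℕ} (hsymm : ∀ u v, w u v = w v u) (Δ : ℕ) (u v : V) :
    padToRegular w Δ u v = padToRegular w Δ v u := by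
  unfold padToRegular
  rcases eq_or_ne u v with rfl | huv
  · rfl
  · simp [huv, huv.symm, hsymm u v]

theorem exists_isMatching_saturates_of_perm {w : V → V → ℕ} (hsymm : ∀ u v, w u v = w v u)
    (hbip : BipartiteOn (support w) Set.univ) (σ : Equiv.Perm V)
    (hσ : ∀ x, σ x ≠ x → 1 ≤ w x (σ x)) :
    ∃ M, IsMatching w M ∧ ∀ v, σ v ≠ v → Saturates M v := by
  obtain ⟨A, hA⟩ := hbip
  have hside (x : V) (hx : σ x ≠ x) : x ∈ A ↔ σ x ∉ A :=
    hA trivial trivial ⟨hx.symm, hσ x hx, hsymm x (σ x) ▸ hσ x hx⟩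
  refine ⟨({x | x ∈ A ∧ σ x ≠ x} : Finset V).image fun x => s(x, σ x), ⟨?_, ?_, ?_⟩, ?_⟩
  · simp only [mem_image, mem_filter_univ]
    rintro _ ⟨x, ⟨-, hx⟩, rfl⟩
    exact Sym2.mk_isDiag_iff.not.2 hx.symm
  · simp only [mem_image, mem_filter_univ]
    rintro u v ⟨x, ⟨-, hx⟩, hxuv⟩
    rcases Sym2.eq_iff.1 hxuv with ⟨rfl, rfl⟩ | ⟨rfl, rfl⟩
    · exact hσ x hx
    · exact hsymm x (σ x) ▸ hσ x hx
  · simp only [mem_image, mem_filter_univ]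
    rintro _ ⟨x, ⟨hxA, hx⟩, rfl⟩ _ ⟨y, ⟨hyA, hy⟩, rfl⟩ hne z hzx hzy
    have hσx := (hside x hx).1 hxA
    have hσy := (hside y hy).1 hyA
    rw [Sym2.mem_iff] at hzx hzy
    rcases hzx with rfl | rfl <;> rcases hzy with h | h
    · exact hne (by rw [h])
    · exact hσy (h ▸ hxA)
    · exact hσx (h ▸ hyA)
    · exact hne (by rw [σ.injective h])
  · intro v hv
    by_cases hvA : v ∈ A
    · exact ⟨s(v, σ v), mem_image_of_mem _ ((mem_filter_univ _).2 ⟨hvA, hv⟩), Sym2.mem_mk_left _ _⟩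
    · have hu : σ (σ.symm v) ≠ σ.symm v := by
        rw [σ.apply_symm_apply, Ne, eq_comm, Equiv.symm_apply_eq]
        exact Ne.symm hv
      refine ⟨s(σ.symm v, v), mem_image.2 ⟨σ.symm v, (mem_filter_univ _).2 ⟨?_, hu⟩, ?_⟩,
        Sym2.mem_mk_right _ _⟩
      · exact (hside _ hu).2 (by simpa using hvA)
      · simp

theorem bipartite_maxdeg_saturating_matching_general {V : Type} [Fintype V]
    (w : V → V → ℕ) (hsymm : ∀ u v, w u v = w v u) (hloop : ∀ v, w v v = 0)
    (hΔ : 1 ≤ maxDeg w)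
    (hbip : BipartiteOn (support w) Set.univ) :
    ∃ M : Finset (Sym2 V), IsMatching w M ∧
      ∀ v : V, deg w v = maxDeg w → Saturates M v := by
  have hrow (u : V) : ∑ v, padToRegular w (maxDeg w) u v = maxDeg w :=
    sum_padToRegular (le_sup (f := deg w) (mem_univ u))
  obtain ⟨σ, hσ⟩ := exists_perm_forall_pos_of_sum_eq_of_sum_le _ hΔ hrow fun v => by
    simp_rw [padToRegular_comm hsymm _ _ v, hrow, le_refl]
  have hedge (x : V) (hx : σ x ≠ x) : 1 ≤ w x (σ x) := by
    simpa [padToRegular, hx.symm, Nat.one_le_iff_ne_zero, pos_iff_ne_zero] using hσ x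
  obtain ⟨M, hM, hsat⟩ := exists_isMatching_saturates_of_perm hsymm hbip σ hedge
  refine ⟨M, hM, fun v hv => hsat v fun hfix => ?_⟩
  simpa [padToRegular, hfix, hloop, hv] using hσ v

/-- If the support of `G` is bipartite, some matching saturates every
vertex of maximum degree `Δ ≥ 1`. -/
theorem bipartite_maxdeg_saturating_matching {V : Type} [Fintype V] [DecidableEq V]
    (w : V → V → ℕ) (hsymm : ∀ u v, w u v = w v u) (hloop : ∀ v, w v v = 0)
    (hΔ : 1 ≤ maxDeg w)
    (hbip : BipartiteOn (support w) Set.univ) :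
    ∃ M : Finset (Sym2 V), IsMatching w M ∧
      ∀ v : V, deg w v = maxDeg w → Saturates M v :=
  bipartite_maxdeg_saturating_matching_general w hsymm hloop hΔ hbip

end NSBPaper
end
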